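/- arXiv:2512.15785 — 6 statements merged into one kernel-verified Lean document; each statement's English description precedes it below -/
import Mathlib

section
/- Let E ∈ (0,1), r ∈ ℕ, p : ℝ → ℝ, s⁰ : ℕ → ℝ, and let (s_t, x_t) solve the delayed chemostat system s_{t+1} = E s⁰_t + (1-E)(s_t - x_t p(s_t)), x_{t+1} = (1-E) x_t + x_{t-r} p(s_{t-r}) (1-E)^{r+1}. Define y_{t+1} := ∑_{k=0}^{r-1} x_{t-k} p(s_{t-k}) (1-E)^{k+1}, and let z satisfy z_{t+1} = (1-E) z_t + E s⁰_t. Then for all t ≥ 0, s_{t+1} + x_{t+1} + y_{t+1} - z_{t+1} = (1-E)^{t+1} (s_0 + x_0 + y_0 - z_0). -/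
/-!
Stored nutrient `y` is a delayed geometric window over the uptake `x t * p (s t)`, so one time
step multiplies it by `1 - E`, adds the fresh uptake and drops the term leaving the window after
`r` steps; these are exactly the uptake terms in the equations for `s` and `x`. Hence `s + x + y`
obeys the same affine recursion as `z`, and their difference decays like `(1 - E) ^ t`.
-/

open Finset

theorem sum_range_delay_succ {R : Type*} [CommRing R] (f : ℤ → R) (q : R) (r : ℕ) (t : ℤ) :
    ∑ k ∈ range r, f (t - k) * q ^ (k + 1) =
      q * ∑ k ∈ range r, f (t - 1 - k) * q ^ (k + 1) + q * f t - q ^ (r + 1) * f (t - r) := by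
  set g : ℕ → R := fun k => f (t - k) * q ^ (k + 1)
  have hshift : ∀ k : ℕ, g (k + 1) = q * (f (t - 1 - k) * q ^ (k + 1)) := fun k => by
    simp only [g, Nat.cast_succ, sub_add_eq_sub_sub, sub_right_comm t (k : ℤ) 1]
    ring
  have hsplit := (sum_range_succ g r).symm.trans (sum_range_succ' g r)
  simp only [hshift, ← mul_sum] at hsplit
  simp only [g, Nat.cast_zero, sub_zero, zero_add, pow_one] at hsplit
  linear_combination hsplit

theorem eq_pow_toNat_mul_of_succ_eq_mul {R : Type*} [Monoid R] (u : ℤ → R) (q : R)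
    (hu : ∀ t : ℤ, 0 ≤ t → u (t + 1) = q * u t) :
    ∀ t : ℤ, 0 ≤ t → u t = q ^ t.toNat * u 0 := by
  intro t ht
  induction t, ht using Int.leInduction with
  | base => simp
  | succ n hn ih =>
    rw [hu n hn, ih, show (n + 1).toNat = n.toNat + 1 by omega, pow_succ', mul_assoc]

theorem stmt3_general (E : ℝ) (r : ℕ)
    (p : ℝ → ℝ) (s0 s x y z : ℤ → ℝ)
    (hs : ∀ t : ℤ, 0 ≤ t →
      s (t + 1) = E * s0 t + (1 - E) * (s t - x t * p (s t)))
    (hx : ∀ t : ℤ, 0 ≤ t →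
      x (t + 1) = (1 - E) * x t + x (t - r) * p (s (t - r)) * (1 - E) ^ (r + 1))
    (hy : ∀ t : ℤ, -1 ≤ t →
      y (t + 1) = ∑ k ∈ Finset.range r, x (t - k) * p (s (t - k)) * (1 - E) ^ (k + 1))
    (hz : ∀ t : ℤ, 0 ≤ t → z (t + 1) = (1 - E) * z t + E * s0 t) :
    ∀ t : ℤ, 0 ≤ t →
      s (t + 1) + x (t + 1) + y (t + 1) - z (t + 1) =
        (1 - E) ^ ((t + 1).toNat) * (s 0 + x 0 + y 0 - z 0) := by
  have hy_step : ∀ t : ℤ, 0 ≤ t → y (t + 1) = (1 - E) * y t + (1 - E) * (x t * p (s t))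
      - (1 - E) ^ (r + 1) * (x (t - r) * p (s (t - r))) := by
    intro t ht
    have hy_prev := hy (t - 1) (by omega)
    rw [sub_add_cancel] at hy_prev
    rw [hy t (by omega), hy_prev]
    exact sum_range_delay_succ (fun u => x u * p (s u)) (1 - E) r t
  have hdecay := eq_pow_toNat_mul_of_succ_eq_mul (fun t => s t + x t + y t - z t) (1 - E)
    fun t ht => by
      simp only [hs t ht, hx t ht, hy_step t ht, hz t ht]
      ring
  exact fun t ht => hdecay (t + 1) (by omega)

/-- Conservation law for the delayed discrete chemostat:
`s_{t+1} + x_{t+1} + y_{t+1} - z_{t+1} = (1-E)^{t+1} (s_0 + x_0 + y_0 - z_0)`. -/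
theorem stmt3 (E : ℝ) (hE0 : 0 < E) (hE1 : E < 1) (r : ℕ)
    (p : ℝ → ℝ) (s0 s x y z : ℤ → ℝ)
    (hs : ∀ t : ℤ, 0 ≤ t →
      s (t + 1) = E * s0 t + (1 - E) * (s t - x t * p (s t)))
    (hx : ∀ t : ℤ, 0 ≤ t →
      x (t + 1) = (1 - E) * x t + x (t - r) * p (s (t - r)) * (1 - E) ^ (r + 1))
    (hy : ∀ t : ℤ, -1 ≤ t →
      y (t + 1) = ∑ k ∈ Finset.range r, x (t - k) * p (s (t - k)) * (1 - E) ^ (k + 1))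
    (hz : ∀ t : ℤ, 0 ≤ t → z (t + 1) = (1 - E) * z t + E * s0 t) :
    ∀ t : ℤ, 0 ≤ t →
      s (t + 1) + x (t + 1) + y (t + 1) - z (t + 1) =
        (1 - E) ^ ((t + 1).toNat) * (s 0 + x 0 + y 0 - z 0) :=
  stmt3_general E r p s0 s x y z hs hx hy hz
end

section
/- Under the conservation law of the delayed discrete chemostat: if s_0 + x_0 + y_0 ≤ z_0, then s_t + x_t + y_t ≤ z_t for all t ≥ 0. -/
/-!
The quantity `V t = s t + x t + y t - z t` obeys `V (t + 1) = (1 - E) * V t`: the consumption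
`x t * p (s t)` leaving `s` re-enters the distributed delay `y`, and what leaves `y` after `r + 1`
steps is exactly the delayed recruitment into `x`. Since `1 - E ≥ 0`, the sign of `V 0` persists.
-/

open Finset

theorem sum_range_delay_sub_mul_sum (f : ℤ → ℝ) (c : ℝ) (r : ℕ) (t : ℤ) :
    ∑ k ∈ range r, f (t - k) * c ^ (k + 1) - c * ∑ k ∈ range r, f (t - 1 - k) * c ^ (k + 1)
      = f t * c - f (t - r) * c ^ (r + 1) := by
  set g : ℕ → ℝ := fun k => f (t - k) * c ^ (k + 1)
  have hshift : c * ∑ k ∈ range r, f (t - 1 - k) * c ^ (k + 1) = ∑ k ∈ range r, g (k + 1) := by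
    rw [mul_sum]
    refine sum_congr rfl fun k _ => ?_
    rw [show t - 1 - (k : ℤ) = t - ((k + 1 : ℕ) : ℤ) by push_cast; ring]
    ring
  rw [hshift, ← sum_sub_distrib, sum_range_sub']
  simp

theorem Int.nonpos_of_succ_eq_mul {V : ℤ → ℝ} {c : ℝ} (hc : 0 ≤ c)
    (hV : ∀ t, 0 ≤ t → V (t + 1) = c * V t) (h0 : V 0 ≤ 0) : ∀ t, 0 ≤ t → V t ≤ 0 := by
  intro t ht
  induction t, ht using Int.leInduction with
  | base => exact h0
  | succ t ht ih => rw [hV t ht]; exact mul_nonpos_of_nonneg_of_nonpos hc ih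

theorem stmt4_general (E : ℝ) (hE1 : E < 1) (r : ℕ)
    (p : ℝ → ℝ) (s0 s x y z : ℤ → ℝ)
    (hs : ∀ t : ℤ, 0 ≤ t →
      s (t + 1) = E * s0 t + (1 - E) * (s t - x t * p (s t)))
    (hx : ∀ t : ℤ, 0 ≤ t →
      x (t + 1) = (1 - E) * x t + x (t - r) * p (s (t - r)) * (1 - E) ^ (r + 1))
    (hy : ∀ t : ℤ, -1 ≤ t →
      y (t + 1) = ∑ k ∈ Finset.range r, x (t - k) * p (s (t - k)) * (1 - E) ^ (k + 1))
    (hz : ∀ t : ℤ, 0 ≤ t → z (t + 1) = (1 - E) * z t + E * s0 t)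
    (hinit : s 0 + x 0 + y 0 ≤ z 0) :
    ∀ t : ℤ, 0 ≤ t → s t + x t + y t ≤ z t := by
  have hconserve : ∀ t : ℤ, 0 ≤ t → s (t + 1) + x (t + 1) + y (t + 1) - z (t + 1)
      = (1 - E) * (s t + x t + y t - z t) := by
    intro t ht
    have hdelay := sum_range_delay_sub_mul_sum (fun u => x u * p (s u)) (1 - E) r t
    have hyt := hy (t - 1) (by linarith)
    rw [sub_add_cancel] at hyt
    beta_reduce at hdelay
    rw [← hy t (by linarith), ← hyt] at hdelay
    rw [hs t ht, hx t ht, hz t ht]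
    linarith
  intro t ht
  have hV := Int.nonpos_of_succ_eq_mul (V := fun t => s t + x t + y t - z t)
    (sub_nonneg.mpr hE1.le) hconserve (by linarith) t ht
  linarith

/-- Under the conservation law of the delayed discrete chemostat:
if `s_0 + x_0 + y_0 ≤ z_0`, then `s_t + x_t + y_t ≤ z_t` for all `t ≥ 0`. -/
theorem stmt4 (E : ℝ) (hE0 : 0 < E) (hE1 : E < 1) (r : ℕ)
    (p : ℝ → ℝ) (s0 s x y z : ℤ → ℝ)
    (hs : ∀ t : ℤ, 0 ≤ t →
      s (t + 1) = E * s0 t + (1 - E) * (s t - x t * p (s t)))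
    (hx : ∀ t : ℤ, 0 ≤ t →
      x (t + 1) = (1 - E) * x t + x (t - r) * p (s (t - r)) * (1 - E) ^ (r + 1))
    (hy : ∀ t : ℤ, -1 ≤ t →
      y (t + 1) = ∑ k ∈ Finset.range r, x (t - k) * p (s (t - k)) * (1 - E) ^ (k + 1))
    (hz : ∀ t : ℤ, 0 ≤ t → z (t + 1) = (1 - E) * z t + E * s0 t)
    (hinit : s 0 + x 0 + y 0 ≤ z 0) :
    ∀ t : ℤ, 0 ≤ t → s t + x t + y t ≤ z t :=
  stmt4_general E hE1 r p s0 s x y z hs hx hy hz hinit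
end

section
/- Let E ∈ (0,1), r ∈ ℕ, and let p : [0,∞) → ℝ be C¹ with p(0) = 0 and 0 < p'(ξ) for all ξ ≥ 0. Suppose z_t p'(ξ) ≤ 1 for all t ≥ 0 and all ξ ≥ 0, where z solves z_{t+1} = (1-E) z_t + E s⁰_t with s⁰_t > 0. If the initial conditions (s_j, x_j) for -r ≤ j ≤ 0 are nonnegative and s_0 + x_0 + y_0 ≤ z_0, then the solution of the delayed chemostat system satisfies x_t ≥ 0 and s_t > 0 for all t > 0. -/
/-!
The total mass `s + x + y` obeys the same recursion as `z`, with the delayed term of `x` cancelling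
against the telescoped sum `y`; hence `s_t + x_t + y_t ≤ z_t` propagates, and in particular
`x_t ≤ z_t` while `s, x, y` stay nonnegative. By the mean value theorem and `p 0 = 0`,
`x_t p(s_t) = x_t p'(ξ_t) s_t ≤ z_t p'(ξ_t) s_t ≤ s_t`, so the consumed substrate never exceeds
the available one and `s_{t+1} ≥ E s⁰_t > 0`. Nonnegativity of `x_{t+1}` is immediate once the
history is nonnegative, which closes the induction.
-/

open Set Finset

theorem nonneg_of_derivWithin_Ici_nonneg {p : ℝ → ℝ} (hp : DifferentiableOn ℝ p (Ici 0))
    (hp0 : p 0 = 0) (hp' : ∀ ξ, 0 ≤ ξ → 0 ≤ derivWithin p (Ici 0) ξ) {a : ℝ} (ha : 0 ≤ a) :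
    0 ≤ p a := by
  have hmono : MonotoneOn p (Ici 0) := by
    refine monotoneOn_of_deriv_nonneg (convex_Ici 0) hp.continuousOn
      (hp.mono interior_subset) fun ξ hξ => ?_
    rw [interior_Ici] at hξ
    rw [← derivWithin_of_mem_nhds (Ici_mem_nhds hξ)]
    exact hp' ξ hξ.le
  simpa [hp0] using hmono self_mem_Ici (mem_Ici.2 ha) ha

theorem mul_le_of_mul_derivWithin_Ici_le_one {p : ℝ → ℝ} (hp : DifferentiableOn ℝ p (Ici 0))
    (hp0 : p 0 = 0) {X a : ℝ} (hX : ∀ ξ, 0 ≤ ξ → X * derivWithin p (Ici 0) ξ ≤ 1)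
    (ha : 0 ≤ a) : X * p a ≤ a := by
  rcases ha.eq_or_lt with rfl | ha
  · simp [hp0]
  obtain ⟨c, hc, hslope⟩ := exists_deriv_eq_slope p ha (hp.continuousOn.mono Icc_subset_Ici_self)
    (hp.mono fun u hu => mem_Ici.2 hu.1.le)
  have hpa : p a = deriv p c * a := by
    rw [hslope, hp0, sub_zero, sub_zero, div_mul_cancel₀ _ ha.ne']
  have hXc : X * deriv p c ≤ 1 := by
    rw [← derivWithin_of_mem_nhds (Ici_mem_nhds hc.1)]
    exact hX c hc.1.le
  calc X * p a = (X * deriv p c) * a := by rw [hpa]; ring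
    _ ≤ 1 * a := by gcongr
    _ = a := one_mul a

theorem sum_range_lag_mul_pow_succ {R : Type*} [CommRing R] (f : ℤ → R) (q : R) (r : ℕ)
    (n : ℤ) :
    ∑ k ∈ range r, f (n - k) * q ^ (k + 1) + f (n - r) * q ^ (r + 1)
      = q * f n + q * ∑ k ∈ range r, f (n - 1 - k) * q ^ (k + 1) := by
  rw [← sum_range_succ (fun k : ℕ => f (n - k) * q ^ (k + 1)), sum_range_succ', mul_sum,
    add_comm]
  simp only [Nat.cast_zero, sub_zero, zero_add, pow_one, Nat.cast_succ, sub_add_eq_sub_sub,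
    sub_right_comm n _ (1 : ℤ)]
  congr 1
  · ring
  · exact sum_congr rfl fun k _ => by ring

section Chemostat

variable {E : ℝ} {r : ℕ} {p : ℝ → ℝ} {s0 s x y z : ℤ → ℝ} {n : ℤ}

def ChemostatInvariant (r : ℕ) (s x y z : ℤ → ℝ) (n : ℤ) : Prop :=
  (∀ j, -(r : ℤ) ≤ j → j ≤ n → 0 ≤ s j ∧ 0 ≤ x j) ∧ s n + x n + y n ≤ z n

theorem mass_succ
    (hs : ∀ t : ℤ, 0 ≤ t → s (t + 1) = E * s0 t + (1 - E) * (s t - x t * p (s t)))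
    (hx : ∀ t : ℤ, 0 ≤ t →
      x (t + 1) = (1 - E) * x t + x (t - r) * p (s (t - r)) * (1 - E) ^ (r + 1))
    (hy : ∀ t : ℤ, -1 ≤ t →
      y (t + 1) = ∑ k ∈ range r, x (t - k) * p (s (t - k)) * (1 - E) ^ (k + 1))
    (hn : 0 ≤ n) :
    s (n + 1) + x (n + 1) + y (n + 1) = E * s0 n + (1 - E) * (s n + x n + y n) := by
  have hyn := hy (n - 1) (by linarith)
  rw [sub_add_cancel] at hyn
  have htel := sum_range_lag_mul_pow_succ (fun j => x j * p (s j)) (1 - E) r n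
  rw [hs n hn, hx n hn, hy n (by linarith), hyn]
  simp only [mul_assoc] at htel ⊢
  linear_combination htel

theorem y_nonneg (hpnn : ∀ a, 0 ≤ a → 0 ≤ p a)
    (hy : ∀ t : ℤ, -1 ≤ t →
      y (t + 1) = ∑ k ∈ range r, x (t - k) * p (s (t - k)) * (1 - E) ^ (k + 1))
    (hE1 : E < 1) (hn : 0 ≤ n) (hsx : ∀ j, n - r ≤ j → j < n → 0 ≤ s j ∧ 0 ≤ x j) :
    0 ≤ y n := by
  have hyn := hy (n - 1) (by linarith)
  rw [sub_add_cancel] at hyn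
  rw [hyn]
  refine sum_nonneg fun k hk => ?_
  have hk : (k : ℤ) < r := by exact_mod_cast mem_range.1 hk
  obtain ⟨hsk, hxk⟩ := hsx (n - 1 - k) (by omega) (by omega)
  have := hpnn _ hsk
  have : 0 ≤ 1 - E := by linarith
  positivity

theorem ChemostatInvariant.succ_nonneg_pos (hE0 : 0 < E) (hE1 : E < 1) (hs0 : 0 < s0 n)
    (hpnn : ∀ a, 0 ≤ a → 0 ≤ p a) (hup : ∀ X a, X ≤ z n → 0 ≤ a → X * p a ≤ a)
    (hs : ∀ t : ℤ, 0 ≤ t → s (t + 1) = E * s0 t + (1 - E) * (s t - x t * p (s t)))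
    (hx : ∀ t : ℤ, 0 ≤ t →
      x (t + 1) = (1 - E) * x t + x (t - r) * p (s (t - r)) * (1 - E) ^ (r + 1))
    (hy : ∀ t : ℤ, -1 ≤ t →
      y (t + 1) = ∑ k ∈ range r, x (t - k) * p (s (t - k)) * (1 - E) ^ (k + 1))
    (hn : 0 ≤ n) (hinv : ChemostatInvariant r s x y z n) :
    0 ≤ x (n + 1) ∧ 0 < s (n + 1) := by
  obtain ⟨hhist, hmass⟩ := hinv
  have hyn : 0 ≤ y n := y_nonneg hpnn hy hE1 hn fun j hj _ => hhist j (by omega) (by omega)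
  obtain ⟨hsn, hxn⟩ := hhist n (by omega) le_rfl
  obtain ⟨hslag, hxlag⟩ := hhist (n - r) (by omega) (by omega)
  have hplag := hpnn _ hslag
  have hE1' : 0 ≤ 1 - E := by linarith
  have huptake : x n * p (s n) ≤ s n := hup _ _ (by linarith) hsn
  constructor
  · rw [hx n hn]
    positivity
  · rw [hs n hn]
    have := mul_nonneg hE1' (sub_nonneg.2 huptake)
    have := mul_pos hE0 hs0
    linarith

theorem ChemostatInvariant.succ (hE0 : 0 < E) (hE1 : E < 1) (hs0 : 0 < s0 n)
    (hpnn : ∀ a, 0 ≤ a → 0 ≤ p a) (hup : ∀ X a, X ≤ z n → 0 ≤ a → X * p a ≤ a)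
    (hz : z (n + 1) = (1 - E) * z n + E * s0 n)
    (hs : ∀ t : ℤ, 0 ≤ t → s (t + 1) = E * s0 t + (1 - E) * (s t - x t * p (s t)))
    (hx : ∀ t : ℤ, 0 ≤ t →
      x (t + 1) = (1 - E) * x t + x (t - r) * p (s (t - r)) * (1 - E) ^ (r + 1))
    (hy : ∀ t : ℤ, -1 ≤ t →
      y (t + 1) = ∑ k ∈ range r, x (t - k) * p (s (t - k)) * (1 - E) ^ (k + 1))
    (hn : 0 ≤ n) (hinv : ChemostatInvariant r s x y z n) :
    ChemostatInvariant r s x y z (n + 1) := by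
  obtain ⟨hxsucc, hssucc⟩ := hinv.succ_nonneg_pos hE0 hE1 hs0 hpnn hup hs hx hy hn
  refine ⟨fun j hj hjn => ?_, ?_⟩
  · rcases (show j ≤ n ∨ j = n + 1 by omega) with hj' | rfl
    · exact hinv.1 j hj hj'
    · exact ⟨hssucc.le, hxsucc⟩
  · rw [mass_succ hs hx hy hn, hz]
    have := mul_le_mul_of_nonneg_left hinv.2 (by linarith : (0 : ℝ) ≤ 1 - E)
    linarith

end Chemostat

/-- positivity of the solution of the delayed chemostat system.
If `p` is C¹ on `[0,∞)` with `p(0)=0`, `p' > 0`, `z_t p'(ξ) ≤ 1`, nonnegative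
initial data with `s_0 + x_0 + y_0 ≤ z_0`, then `x_t ≥ 0` and `s_t > 0` for `t > 0`. -/
theorem stmt5 (E : ℝ) (hE0 : 0 < E) (hE1 : E < 1) (r : ℕ)
    (p : ℝ → ℝ) (hp : ContDiffOn ℝ 1 p (Set.Ici (0 : ℝ)))
    (hp0 : p 0 = 0)
    (hp' : ∀ ξ : ℝ, 0 ≤ ξ → 0 < derivWithin p (Set.Ici (0 : ℝ)) ξ)
    (s0 s x y z : ℤ → ℝ)
    (hs0pos : ∀ t : ℤ, 0 < s0 t)
    (hz : ∀ t : ℤ, 0 ≤ t → z (t + 1) = (1 - E) * z t + E * s0 t)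
    (hzp : ∀ t : ℤ, 0 ≤ t → ∀ ξ : ℝ, 0 ≤ ξ →
      z t * derivWithin p (Set.Ici (0 : ℝ)) ξ ≤ 1)
    (hs : ∀ t : ℤ, 0 ≤ t →
      s (t + 1) = E * s0 t + (1 - E) * (s t - x t * p (s t)))
    (hx : ∀ t : ℤ, 0 ≤ t →
      x (t + 1) = (1 - E) * x t + x (t - r) * p (s (t - r)) * (1 - E) ^ (r + 1))
    (hy : ∀ t : ℤ, -1 ≤ t →
      y (t + 1) = ∑ k ∈ Finset.range r, x (t - k) * p (s (t - k)) * (1 - E) ^ (k + 1))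
    (hinits : ∀ j : ℤ, -(r : ℤ) ≤ j → j ≤ 0 → 0 ≤ s j)
    (hinitx : ∀ j : ℤ, -(r : ℤ) ≤ j → j ≤ 0 → 0 ≤ x j)
    (hinit : s 0 + x 0 + y 0 ≤ z 0) :
    ∀ t : ℤ, 0 < t → 0 ≤ x t ∧ 0 < s t := by
  have hpd : DifferentiableOn ℝ p (Ici 0) := hp.differentiableOn one_ne_zero
  have hpnn : ∀ a, 0 ≤ a → 0 ≤ p a := fun a =>
    nonneg_of_derivWithin_Ici_nonneg hpd hp0 fun ξ hξ => (hp' ξ hξ).le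
  have hup : ∀ n, 0 ≤ n → ∀ X a, X ≤ z n → 0 ≤ a → X * p a ≤ a := fun n hn X a hXz ha =>
    mul_le_of_mul_derivWithin_Ici_le_one hpd hp0
      (fun ξ hξ => (mul_le_mul_of_nonneg_right hXz (hp' ξ hξ).le).trans (hzp n hn ξ hξ)) ha
  have hinv : ∀ n, 0 ≤ n → ChemostatInvariant r s x y z n := by
    intro n hn
    induction n, hn using Int.leInduction with
    | base => exact ⟨fun j hj hj0 => ⟨hinits j hj hj0, hinitx j hj hj0⟩, hinit⟩
    | succ n hn ih => exact ih.succ hE0 hE1 (hs0pos n) hpnn (hup n hn) (hz n hn) hs hx hy hn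
  intro t ht
  simpa using (hinv (t - 1) (by omega)).succ_nonneg_pos hE0 hE1 (hs0pos _) hpnn
    (hup _ (by omega)) hs hx hy (by omega)
end

section
/- Let r ∈ ℕ, M > 0, and let f, g, φ, ψ be nonnegative sequences with f_t ≤ M for all t ≥ 0, satisfying the recursions φ_{t+1} = ∏_{k=t+1-r}^{t}(1+φ_k f_k)^{-1} and ψ_{t+1} = ∏_{k=t+1-r}^{t}(1+ψ_k g_k)^{-1}. Assume there exists ε > 0 with f_t > g_t + ε for all t ≥ 0. Then there exist constants η > 0 and T ≥ r such that ∏_{k=t_1+1}^{t_2} (1+φ_{k-r} f_{k-r})/(1+ψ_{k-r} g_{k-r}) > (1+η)^{2(t_2-t_1)} for all t_1 ≥ T and t_2 - t_1 ≥ T. -/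
/-!
With `Φ t = ∏_{0<k≤t} (1 + φ k * f k)` the recursion reads `φ (t+1) = Φ (t-r) / Φ t`, i.e. `Φ`
solves the linear delay equation `Φ (t+1) = Φ t + f (t+1) * Φ (t-r)`; likewise `Ψ` with `ψ, g`.
The recursion forces `φ ≤ 1`, so all factors lie in `[1, 1+M]` and `Ψ t ≤ (1+M)^r * Ψ (t-r)`;
together with `f ≥ g + ε` this makes `ρ^t * Ψ t` a subsolution of the equation of `Φ` for some
`ρ > 1`. As `f ≥ 0`, the delay equation obeys a comparison principle; comparing on an initial
window of length `r` gives `ρ^(b-a) ≤ (1+M)^r * (Φ b / Φ a) / (Ψ b / Ψ a)`, and the product in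
the theorem is this ratio for `a = t₁ - r`, `b = t₂ - r`. Any `η` with `(1+η)^2 < ρ` then works
for long enough windows.
-/

open Finset Filter

theorem prod_Ioc_mul_prod_Ioc {α β : Type*} [LinearOrder α] [LocallyFiniteOrder α] [CommMonoid β]
    (F : α → β) {a b c : α} (hab : a ≤ b) (hbc : b ≤ c) :
    (∏ k ∈ Ioc a b, F k) * ∏ k ∈ Ioc b c, F k = ∏ k ∈ Ioc a c, F k := by
  rw [← Ioc_union_Ioc_eq_Ioc hab hbc, prod_union (Ioc_disjoint_Ioc_of_le le_rfl)]

theorem prod_Icc_add_one_comp_sub {β : Type*} [CommMonoid β] (F : ℤ → β) (a b c : ℤ) :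
    ∏ k ∈ Icc (a + 1) b, F (k - c) = ∏ k ∈ Ioc (a - c) (b - c), F k :=
  prod_nbij' (· - c) (· + c) (fun k hk => by simp only [mem_Icc, mem_Ioc] at hk ⊢; omega)
    (fun k hk => by simp only [mem_Icc, mem_Ioc] at hk ⊢; omega) (by simp) (by simp) (by simp)

theorem le_of_delay_subsolution_of_supersolution {r : ℕ} {a : ℤ} {c u v : ℤ → ℝ}
    (hc : ∀ t, a ≤ t → 0 ≤ c (t + 1))
    (hu : ∀ t, a ≤ t → u (t + 1) ≤ u t + c (t + 1) * u (t - r))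
    (hv : ∀ t, a ≤ t → v t + c (t + 1) * v (t - r) ≤ v (t + 1))
    (hinit : ∀ t, a - r ≤ t → t ≤ a → u t ≤ v t) {t : ℤ} (ht : a - r ≤ t) : u t ≤ v t := by
  suffices h : ∀ b, a ≤ b → ∀ s, a - r ≤ s → s ≤ b → u s ≤ v s from
    h (max a t) le_sup_left t ht le_sup_right
  refine Int.leInduction hinit fun b hab ih s hs hsb => ?_
  rcases (show s ≤ b ∨ s = b + 1 by omega) with hsb | rfl
  · exact ih s hs hsb
  calc u (b + 1) ≤ u b + c (b + 1) * u (b - r) := hu b hab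
    _ ≤ v b + c (b + 1) * v (b - r) := by
        gcongr ?_ + _ * ?_
        · exact ih b (by omega) le_rfl
        · exact hc b hab
        · exact ih (b - r) (by omega) (by omega)
    _ ≤ v (b + 1) := hv b hab

structure IsDelayCorrection (r : ℕ) (f φ : ℤ → ℝ) : Prop where
  nonneg : ∀ t : ℤ, 1 - (r : ℤ) ≤ t → 0 ≤ f t ∧ 0 ≤ φ t
  recursion : ∀ t : ℤ, 0 ≤ t → φ (t + 1) = (∏ k ∈ Icc (t + 1 - (r : ℤ)) t, (1 + φ k * f k))⁻¹

noncomputable def cumProd (φ f : ℤ → ℝ) (t : ℤ) : ℝ := ∏ k ∈ Ioc 0 t, (1 + φ k * f k)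

theorem cumProd_add_one (φ f : ℤ → ℝ) {t : ℤ} (ht : 0 ≤ t) :
    cumProd φ f (t + 1) = cumProd φ f t * (1 + φ (t + 1) * f (t + 1)) := by
  rw [cumProd, ← insert_Ioc_right_eq_Ioc_add_one ht, prod_insert (by simp), mul_comm, cumProd]

namespace IsDelayCorrection

variable {r : ℕ} {f φ : ℤ → ℝ}

theorem one_le_factor (h : IsDelayCorrection r f φ) {k : ℤ} (hk : 1 - (r : ℤ) ≤ k) :
    1 ≤ 1 + φ k * f k :=
  le_add_of_nonneg_right (mul_nonneg (h.nonneg k hk).2 (h.nonneg k hk).1)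

theorem le_one (h : IsDelayCorrection r f φ) {t : ℤ} (ht : 1 ≤ t) : φ t ≤ 1 := by
  obtain ⟨s, hs, rfl⟩ : ∃ s, 0 ≤ s ∧ t = s + 1 := ⟨t - 1, by omega, by ring⟩
  rw [h.recursion s hs]
  exact inv_le_one_of_one_le₀ (one_le_prod fun k hk => h.one_le_factor (by simp at hk; omega))

theorem factor_le (h : IsDelayCorrection r f φ) {M : ℝ} {k : ℤ} (hk : 1 ≤ k) (hfk : f k ≤ M) :
    1 + φ k * f k ≤ 1 + M := by
  have := mul_le_of_le_one_left (h.nonneg k (by omega)).1 (h.le_one hk)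
  linarith

theorem one_le_cumProd (h : IsDelayCorrection r f φ) (t : ℤ) : 1 ≤ cumProd φ f t :=
  one_le_prod fun k hk => h.one_le_factor (by simp at hk; omega)

theorem cumProd_pos (h : IsDelayCorrection r f φ) (t : ℤ) : 0 < cumProd φ f t :=
  zero_lt_one.trans_le (h.one_le_cumProd t)

theorem cumProd_mono (h : IsDelayCorrection r f φ) {a b : ℤ} (hab : a ≤ b) :
    cumProd φ f a ≤ cumProd φ f b :=
  prod_le_prod_of_subset_of_one_le (Ioc_subset_Ioc_right hab)
    (fun k hk => zero_le_one.trans (h.one_le_factor (by simp at hk; omega)))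
    (fun k hk _ => h.one_le_factor (by simp at hk; omega))

theorem prod_Ioc_eq_cumProd_div (h : IsDelayCorrection r f φ) {a b : ℤ} (ha : 0 ≤ a) (hab : a ≤ b) :
    ∏ k ∈ Ioc a b, (1 + φ k * f k) = cumProd φ f b / cumProd φ f a := by
  rw [eq_div_iff (h.cumProd_pos a).ne', mul_comm, cumProd, cumProd, prod_Ioc_mul_prod_Ioc _ ha hab]

theorem cumProd_le_pow_mul (h : IsDelayCorrection r f φ) {M : ℝ} (hfM : ∀ k, 1 ≤ k → f k ≤ M)
    {a b : ℤ} (ha : 0 ≤ a) (hab : a ≤ b) :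
    cumProd φ f b ≤ (1 + M) ^ (b - a).toNat * cumProd φ f a := by
  have hwin : ∏ k ∈ Ioc a b, (1 + φ k * f k) ≤ (1 + M) ^ (b - a).toNat := by
    rw [← Int.card_Ioc, ← prod_const]
    exact prod_le_prod (fun k hk => zero_le_one.trans (h.one_le_factor (by simp at hk; omega)))
      (fun k hk => h.factor_le (by simp at hk; omega) (hfM k (by simp at hk; omega)))
  rwa [← div_le_iff₀ (h.cumProd_pos a), ← h.prod_Ioc_eq_cumProd_div ha hab]

theorem cumProd_add_one_eq (h : IsDelayCorrection r f φ) {t : ℤ} (ht : (r : ℤ) ≤ t) :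
    cumProd φ f (t + 1) = cumProd φ f t + f (t + 1) * cumProd φ f (t - r) := by
  have hwin : ∏ k ∈ Icc (t + 1 - (r : ℤ)) t, (1 + φ k * f k)
      = cumProd φ f t / cumProd φ f (t - r) := by
    rw [← h.prod_Ioc_eq_cumProd_div (by omega) (by omega)]
    congr 1; ext k; simp only [mem_Icc, mem_Ioc]; omega
  have := (h.cumProd_pos t).ne'
  have := (h.cumProd_pos (t - r)).ne'
  rw [cumProd_add_one φ f (by omega), h.recursion t (by omega), hwin]
  field_simp

end IsDelayCorrection

/-- The part of the gap `ε` between `f` and `g` used up by the weight `ρ ^ t` in the subsolution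
`ρ ^ t * Ψ t` (with `Q = (1+M)^r`); it vanishes at `ρ = 1`. -/
def delayMargin (r : ℕ) (Q M ρ : ℝ) : ℝ := ρ ^ r * (ρ - 1) * Q + (ρ ^ (r + 1) - 1) * M

theorem exists_one_lt_delayMargin_lt (r : ℕ) (Q M : ℝ) {ε : ℝ} (hε : 0 < ε) :
    ∃ ρ, 1 < ρ ∧ delayMargin r Q M ρ < ε := by
  have hcont : Continuous (delayMargin r Q M) := by unfold delayMargin; fun_prop
  exact ((hcont.tendsto 1).eventually (gt_mem_nhds (by simpa [delayMargin] using hε))).exists_gt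

section Subsolution

variable {r : ℕ} {f g φ ψ : ℤ → ℝ} {M ε ρ : ℝ}

theorem pow_succ_mul_cumProd_add_one_le (hψ : IsDelayCorrection r g ψ)
    (hgM : ∀ k, 1 ≤ k → g k ≤ M) (hρ : 1 ≤ ρ) (hmargin : delayMargin r ((1 + M) ^ r) M ρ ≤ ε)
    {t : ℤ} (ht : (r : ℤ) ≤ t) (hfg : g (t + 1) + ε ≤ f (t + 1)) :
    ρ ^ (r + 1) * cumProd ψ g (t + 1)
      ≤ ρ ^ r * cumProd ψ g t + f (t + 1) * cumProd ψ g (t - r) := by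
  have hwin : cumProd ψ g t ≤ (1 + M) ^ r * cumProd ψ g (t - r) := by
    have := hψ.cumProd_le_pow_mul hgM (a := t - r) (b := t) (by omega) (by omega)
    rwa [show (t - (t - r)).toNat = r by omega] at this
  have hP := (hψ.cumProd_pos (t - r)).le
  have hg0 := (hψ.nonneg (t + 1) (by omega)).1
  have hgM' := hgM (t + 1) (by omega)
  have hρr : 0 ≤ ρ ^ r * (ρ - 1) := mul_nonneg (by positivity) (by linarith)
  have hρr1 : 0 ≤ ρ ^ (r + 1) - 1 := sub_nonneg.2 (one_le_pow₀ hρ)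
  rw [hψ.cumProd_add_one_eq ht]
  calc ρ ^ (r + 1) * (cumProd ψ g t + g (t + 1) * cumProd ψ g (t - r))
      = ρ ^ r * cumProd ψ g t + ρ ^ r * (ρ - 1) * cumProd ψ g t
        + g (t + 1) * cumProd ψ g (t - r)
        + (ρ ^ (r + 1) - 1) * g (t + 1) * cumProd ψ g (t - r) := by ring
    _ ≤ ρ ^ r * cumProd ψ g t + ρ ^ r * (ρ - 1) * ((1 + M) ^ r * cumProd ψ g (t - r))
        + g (t + 1) * cumProd ψ g (t - r) + (ρ ^ (r + 1) - 1) * M * cumProd ψ g (t - r) := by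
      gcongr
    _ = ρ ^ r * cumProd ψ g t
        + (delayMargin r ((1 + M) ^ r) M ρ + g (t + 1)) * cumProd ψ g (t - r) := by
      rw [delayMargin]; ring
    _ ≤ ρ ^ r * cumProd ψ g t + f (t + 1) * cumProd ψ g (t - r) := by
      gcongr; linarith

theorem zpow_mul_cumProd_add_one_le (hψ : IsDelayCorrection r g ψ)
    (hgM : ∀ k, 1 ≤ k → g k ≤ M) (hρ : 1 ≤ ρ) (hmargin : delayMargin r ((1 + M) ^ r) M ρ ≤ ε)
    {t : ℤ} (ht : (r : ℤ) ≤ t) (hfg : g (t + 1) + ε ≤ f (t + 1)) :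
    ρ ^ (t + 1) * cumProd ψ g (t + 1)
      ≤ ρ ^ t * cumProd ψ g t + f (t + 1) * (ρ ^ (t - r) * cumProd ψ g (t - r)) := by
  have hρ0 : ρ ≠ 0 := by positivity
  have e1 : ρ ^ (t + 1) = ρ ^ (t - r) * ρ ^ (r + 1) := by
    rw [← zpow_natCast, ← zpow_add₀ hρ0]; push_cast; ring_nf
  have e2 : ρ ^ t = ρ ^ (t - r) * ρ ^ r := by
    rw [← zpow_natCast, ← zpow_add₀ hρ0]; ring_nf
  have key := pow_succ_mul_cumProd_add_one_le hψ hgM hρ hmargin ht hfg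
  rw [e1, e2]
  calc ρ ^ (t - r) * ρ ^ (r + 1) * cumProd ψ g (t + 1)
      = ρ ^ (t - r) * (ρ ^ (r + 1) * cumProd ψ g (t + 1)) := by ring
    _ ≤ ρ ^ (t - r) * (ρ ^ r * cumProd ψ g t + f (t + 1) * cumProd ψ g (t - r)) := by
      gcongr
    _ = _ := by ring

end Subsolution

theorem pow_le_mul_prod_Ioc_div {r : ℕ} {f g φ ψ : ℤ → ℝ} {M ε ρ : ℝ}
    (hφ : IsDelayCorrection r f φ) (hψ : IsDelayCorrection r g ψ) (hM : 0 ≤ M)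
    (hfM : ∀ k, 1 ≤ k → f k ≤ M) (hgM : ∀ k, 1 ≤ k → g k ≤ M)
    (hfg : ∀ k, 1 ≤ k → g k + ε ≤ f k) (hρ : 1 ≤ ρ)
    (hmargin : delayMargin r ((1 + M) ^ r) M ρ ≤ ε) {a b : ℤ} (ha : (r : ℤ) ≤ a) (hab : a ≤ b) :
    ρ ^ (b - a).toNat ≤ (1 + M) ^ r * ∏ k ∈ Ioc a b, (1 + φ k * f k) / (1 + ψ k * g k) := by
  set Φ := cumProd φ f
  set Ψ := cumProd ψ g
  have hΦ : ∀ t, 0 < Φ t := hφ.cumProd_pos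
  have hΨ : ∀ t, 0 < Ψ t := hψ.cumProd_pos
  have hρ0 : 0 < ρ := by positivity
  set C := ρ ^ a * Ψ a * (1 + M) ^ r / Φ a with hC
  have hcmp : ρ ^ b * Ψ b ≤ C * Φ b := by
    refine le_of_delay_subsolution_of_supersolution (r := r) (a := a) (c := f)
      (u := fun t => ρ ^ t * Ψ t) (v := fun t => C * Φ t)
      (fun t ht => (hφ.nonneg (t + 1) (by omega)).1)
      (fun t ht => zpow_mul_cumProd_add_one_le hψ hgM hρ hmargin (by omega) (hfg _ (by omega)))
      (fun t ht => ?_) (fun t ht hta => ?_) (by omega)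
    · rw [show Φ (t + 1) = Φ t + f (t + 1) * Φ (t - r) from hφ.cumProd_add_one_eq (by omega)]
      linarith
    have hΦa : Φ a ≤ (1 + M) ^ r * Φ t :=
      calc Φ a ≤ (1 + M) ^ (a - t).toNat * Φ t := hφ.cumProd_le_pow_mul hfM (by omega) hta
        _ ≤ (1 + M) ^ r * Φ t :=
          mul_le_mul_of_nonneg_right (pow_le_pow_right₀ (by linarith) (by omega)) (hΦ t).le
    calc ρ ^ t * Ψ t ≤ ρ ^ a * Ψ a :=
          mul_le_mul (zpow_le_zpow_right₀ hρ hta) (hψ.cumProd_mono hta) (hΨ t).le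
            (zpow_pos hρ0 a).le
      _ ≤ ρ ^ a * Ψ a * ((1 + M) ^ r * Φ t / Φ a) :=
          le_mul_of_one_le_right (mul_pos (zpow_pos hρ0 a) (hΨ a)).le ((one_le_div (hΦ a)).2 hΦa)
      _ = C * Φ t := by ring
  rw [prod_div_distrib, hφ.prod_Ioc_eq_cumProd_div (by omega) hab,
    hψ.prod_Ioc_eq_cumProd_div (by omega) hab]
  have e : ρ ^ (b - a).toNat = ρ ^ b / ρ ^ a := by
    rw [← zpow_natCast, Int.toNat_of_nonneg (by omega), zpow_sub₀ hρ0.ne']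
  have := hΨ a
  have := hΨ b
  have := hΦ a
  rw [e, div_le_iff₀ (by positivity)]
  calc ρ ^ b = ρ ^ b * Ψ b / Ψ b := by field_simp
    _ ≤ C * Φ b / Ψ b := by gcongr
    _ = (1 + M) ^ r * (Φ b / Φ a / (Ψ b / Ψ a)) * ρ ^ a := by
      rw [hC]; field_simp

theorem exists_pos_eventually_mul_pow_lt (Q : ℝ) {ρ : ℝ} (hρ : 1 < ρ) :
    ∃ η > 0, ∀ᶠ n in atTop, Q * (1 + η) ^ (2 * n) < ρ ^ n := by
  have hcont : Continuous fun η : ℝ => (1 + η) ^ 2 := by fun_prop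
  obtain ⟨η, hη, hηρ⟩ := ((hcont.tendsto 0).eventually (gt_mem_nhds (by simpa using hρ))).exists_gt
  have hη2 : 0 < (1 + η) ^ 2 := by positivity
  refine ⟨η, hη, ?_⟩
  have hμ : 1 < ρ / (1 + η) ^ 2 := (one_lt_div hη2).2 hηρ
  filter_upwards [(tendsto_pow_atTop_atTop_of_one_lt hμ).eventually_gt_atTop Q] with n hn
  calc Q * (1 + η) ^ (2 * n) < (ρ / (1 + η) ^ 2) ^ n * ((1 + η) ^ 2) ^ n := by
        rw [← pow_mul]; gcongr
    _ = ρ ^ n := by rw [← mul_pow, div_mul_cancel₀ _ hη2.ne']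

/-- comparison lemma for the delay-correction sequences: if
`f_t > g_t + ε` then the windowed products of `(1+φf)/(1+ψg)` grow like
`(1+η)^{2(t₂-t₁)}` for large windows. -/
theorem stmt9 (r : ℕ) (M : ℝ) (hM : 0 < M)
    (f g φ ψ : ℤ → ℝ)
    (hnn : ∀ t : ℤ, 1 - (r : ℤ) ≤ t → 0 ≤ f t ∧ 0 ≤ g t ∧ 0 ≤ φ t ∧ 0 ≤ ψ t)
    (hfM : ∀ t : ℤ, 0 ≤ t → f t ≤ M)
    (hφ : ∀ t : ℤ, 0 ≤ t →
      φ (t + 1) = (∏ k ∈ Finset.Icc (t + 1 - (r : ℤ)) t, (1 + φ k * f k))⁻¹)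
    (hψ : ∀ t : ℤ, 0 ≤ t →
      ψ (t + 1) = (∏ k ∈ Finset.Icc (t + 1 - (r : ℤ)) t, (1 + ψ k * g k))⁻¹)
    (ε : ℝ) (hε : 0 < ε) (hfg : ∀ t : ℤ, 0 ≤ t → g t + ε < f t) :
    ∃ η : ℝ, 0 < η ∧ ∃ T : ℤ, (r : ℤ) ≤ T ∧
      ∀ t1 t2 : ℤ, T ≤ t1 → T ≤ t2 - t1 →
        (∏ k ∈ Finset.Icc (t1 + 1) t2,
            (1 + φ (k - r) * f (k - r)) / (1 + ψ (k - r) * g (k - r)))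
          > (1 + η) ^ ((2 * (t2 - t1)).toNat) := by
  have hφc : IsDelayCorrection r f φ := ⟨fun t ht => ⟨(hnn t ht).1, (hnn t ht).2.2.1⟩, hφ⟩
  have hψc : IsDelayCorrection r g ψ := ⟨fun t ht => ⟨(hnn t ht).2.1, (hnn t ht).2.2.2⟩, hψ⟩
  have hgM : ∀ t, 1 ≤ t → g t ≤ M := fun t ht => by
    linarith [hfg t (by omega), hfM t (by omega)]
  obtain ⟨ρ, hρ, hmargin⟩ := exists_one_lt_delayMargin_lt r ((1 + M) ^ r) M hε
  obtain ⟨η, hη, hgrowth⟩ := exists_pos_eventually_mul_pow_lt ((1 + M) ^ r) hρ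
  obtain ⟨N, hN⟩ := eventually_atTop.1 hgrowth
  refine ⟨η, hη, max (2 * r) N, by omega, fun t1 t2 ht1 ht12 => ?_⟩
  have hratio := pow_le_mul_prod_Ioc_div hφc hψc hM.le (fun t ht => hfM t (by omega)) hgM
    (fun t ht => (hfg t (by omega)).le) hρ.le hmargin.le (a := t1 - r) (b := t2 - r)
    (by omega) (by omega)
  rw [show t2 - r - (t1 - r) = t2 - t1 by ring] at hratio
  rw [prod_Icc_add_one_comp_sub (fun k => (1 + φ k * f k) / (1 + ψ k * g k)),
    show (2 * (t2 - t1)).toNat = 2 * (t2 - t1).toNat by omega]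
  exact lt_of_mul_lt_mul_left ((hN _ (by omega)).trans_le hratio) (by positivity)
end

section
/- Let r ∈ ℕ, E ∈ (0,1), and suppose c_t, x_t > 0 for all t ≥ t_0 - r satisfy c_{t+1} = (1-E)(c_t + f_{t-r} c_{t-r}) and x_{t+1} = (1-E)(x_t + g_{t-r} x_{t-r}) for all t ≥ t_0. If there exists ε ∈ (0, inf f) with |f_t - g_t| < ε for all t ≥ t_0 - r, then c_t / x_t ≤ ((inf f)/(inf f - ε))^{(t - t_0)/(r+1)} · max_{t_0 ≤ s ≤ t_0 + r} (c_s / x_s) for all t ≥ t_0. -/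
/-!
Write `ρ t = c t / x t`. The factor `1 - E` cancels, so `ρ (t + 1)` is the mediant of `ρ t` and
`(f (t - r) / g (t - r)) * ρ (t - r)`, hence at most the larger of the two. From `m ≤ f` and
`|f - g| < ε` one gets `f / g ≤ K := m / (m - ε)`, so the ratio can only gain a factor `K` by
reaching `r + 1` steps back, and strong induction gives `ρ (t0 + n) ≤ K ^ (n / (r + 1)) * M`, with `M` the
largest of the first `r + 1` ratios.
-/

theorem add_div_add_le_max {a b A B : ℝ} (hA : 0 < A) (hB : 0 < B) :
    (a + b) / (A + B) ≤ max (a / A) (b / B) := by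
  rw [div_le_iff₀ (add_pos hA hB), mul_add]
  have ha := (div_le_iff₀ hA).1 (le_max_left (a / A) (b / B))
  have hb := (div_le_iff₀ hB).1 (le_max_right (a / A) (b / B))
  linarith

theorem add_mul_div_add_mul_le_max {a b A B p q K : ℝ} (hA : 0 < A) (hB : 0 < B) (hb : 0 ≤ b)
    (hq : 0 < q) (hpq : p / q ≤ K) :
    (a + p * b) / (A + q * B) ≤ max (a / A) (K * (b / B)) := by
  refine (add_div_add_le_max hA (mul_pos hq hB)).trans (max_le_max le_rfl ?_)
  rw [mul_div_mul_comm]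
  exact mul_le_mul_of_nonneg_right hpq (div_nonneg hb hB.le)

theorem div_le_div_sub_of_abs_sub_lt {f g m ε : ℝ} (hε : 0 ≤ ε) (hεm : ε < m) (hmf : m ≤ f)
    (hfg : |f - g| < ε) : 0 < g ∧ f / g ≤ m / (m - ε) := by
  have hg : f - ε < g := by linarith [(abs_lt.1 hfg).2]
  have hg0 : 0 < g := by linarith
  refine ⟨hg0, ?_⟩
  rw [div_le_div_iff₀ hg0 (by linarith)]
  nlinarith

theorem le_rpow_mul_of_le_max_delay {u : ℕ → ℝ} {K M : ℝ} {r : ℕ} (hK : 1 ≤ K) (hM : 0 ≤ M)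
    (hinit : ∀ n ≤ r, u n ≤ M) (hstep : ∀ n, r ≤ n → u (n + 1) ≤ max (u n) (K * u (n - r))) :
    ∀ n, u n ≤ K ^ ((n : ℝ) / (r + 1)) * M := by
  intro n
  induction n using Nat.strong_induction_on with
  | _ n ih =>
    rcases le_or_gt n r with hn | hn
    · exact (hinit n hn).trans (le_mul_of_one_le_left hM (Real.one_le_rpow hK (by positivity)))
    obtain ⟨n, rfl⟩ : ∃ k, n = k + 1 := ⟨n - 1, by omega⟩
    have hr : (0 : ℝ) < r + 1 := by positivity
    refine (hstep n (by omega)).trans (max_le ?_ ?_)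
    · refine (ih n (by omega)).trans (mul_le_mul_of_nonneg_right ?_ hM)
      refine Real.rpow_le_rpow_of_exponent_le hK (div_le_div_of_nonneg_right ?_ hr.le)
      push_cast
      linarith
    · have hexp : ((n + 1 : ℕ) : ℝ) / (r + 1) = ((n - r : ℕ) : ℝ) / (r + 1) + 1 := by
        rw [Nat.cast_sub (by omega)]
        field_simp
        push_cast
        ring
      rw [hexp, Real.rpow_add_one (by positivity), mul_comm _ K, mul_assoc]
      exact mul_le_mul_of_nonneg_left (ih (n - r) (by omega)) (by positivity)

/-- ratio comparison lemma.  If `c,x > 0` satisfy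
`c_{t+1} = (1-E)(c_t + f_{t-r} c_{t-r})`, `x_{t+1} = (1-E)(x_t + g_{t-r} x_{t-r})`
for `t ≥ t₀`, and `|f_t - g_t| < ε < inf f`, then
`c_t/x_t ≤ (inf f/(inf f - ε))^{(t-t₀)/(r+1)} · max_{t₀ ≤ s ≤ t₀+r} c_s/x_s`. -/
theorem stmt10 (E : ℝ) (hE1 : E < 1) (r : ℕ) (t0 : ℤ)
    (c x f g : ℤ → ℝ)
    (hcpos : ∀ t : ℤ, t0 - r ≤ t → 0 < c t)
    (hxpos : ∀ t : ℤ, t0 - r ≤ t → 0 < x t)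
    (hc : ∀ t : ℤ, t0 ≤ t → c (t + 1) = (1 - E) * (c t + f (t - r) * c (t - r)))
    (hx : ∀ t : ℤ, t0 ≤ t → x (t + 1) = (1 - E) * (x t + g (t - r) * x (t - r)))
    (m : ℝ) (hm : IsGLB {y : ℝ | ∃ t : ℤ, t0 - r ≤ t ∧ y = f t} m)
    (ε : ℝ) (hε0 : 0 < ε) (hεm : ε < m)
    (hfg : ∀ t : ℤ, t0 - r ≤ t → |f t - g t| < ε) :
    ∀ t : ℤ, t0 ≤ t →
      c t / x t ≤ (m / (m - ε)) ^ (((t : ℝ) - t0) / (r + 1)) *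
        (Finset.Icc t0 (t0 + r)).sup'
          ⟨t0, Finset.mem_Icc.2 ⟨le_refl t0, le_add_of_nonneg_right (by positivity)⟩⟩ (fun u => c u / x u) := by
  have hK : 1 ≤ m / (m - ε) := (one_le_div (by linarith)).2 (by linarith)
  set M := (Finset.Icc t0 (t0 + r)).sup' _ (fun u => c u / x u)
  have hinit : ∀ n ≤ r, c (t0 + n) / x (t0 + n) ≤ M :=
    fun n hn => Finset.le_sup' (fun u => c u / x u) (Finset.mem_Icc.2 (by omega))
  have hM : 0 ≤ M := (div_pos (hcpos t0 (by omega)) (hxpos t0 (by omega))).le.trans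
    (by simpa using hinit 0 r.zero_le)
  have hstep : ∀ n, r ≤ n → c (t0 + (n + 1 : ℕ)) / x (t0 + (n + 1 : ℕ)) ≤
      max (c (t0 + n) / x (t0 + n)) (m / (m - ε) * (c (t0 + (n - r : ℕ)) / x (t0 + (n - r : ℕ)))) := by
    intro n hn
    have hdelay : t0 + ((n - r : ℕ) : ℤ) = t0 + n - r := by omega
    obtain ⟨hg, hratio⟩ := div_le_div_sub_of_abs_sub_lt hε0.le hεm (hm.1 ⟨_, by omega, rfl⟩)
      (hfg (t0 + n - r) (by omega))
    rw [Nat.cast_succ, ← add_assoc, hc _ (by omega), hx _ (by omega),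
      mul_div_mul_left _ _ (by linarith), hdelay]
    exact add_mul_div_add_mul_le_max (hxpos _ (by omega)) (hxpos _ (by omega))
      (hcpos _ (by omega)).le hg hratio
  intro t ht
  obtain ⟨n, rfl⟩ : ∃ n : ℕ, t = t0 + n := ⟨(t - t0).toNat, by omega⟩
  push_cast
  rw [add_sub_cancel_left]
  exact le_rpow_mul_of_le_max_delay hK hM hinit hstep n
end

section
/- Let E ∈ (0,1) and define s⁰_t = E^{-1}(1-E)^{-2r-2} if 2^{2n} ≤ t < 2^{2n+1} for some n ∈ ℕ, and s⁰_t = E/2 otherwise. Let z_t = E ∑_{j=-∞}^{t-1} (1-E)^{t-1-j} s⁰_j. Then for every n large enough and every k with 3·2^{2n} ≤ k < 2^{2(n+1)}, one has z_k < E. In particular z_k ≤ E/2 + (1-E)^{2^{2n}} E^{-1}(1-E)^{-2r-2} on that range. -/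
/-!
Reindex the defining sum of `z_k` by the lag `i = k - 1 - j`. For `3·2^{2n} ≤ k < 2^{2n+2}` the
`N = k - 2^{2n+1} ≥ 2^{2n}` most recent inputs fall in the gap `[2^{2n+1}, 2^{2n+2})` between two
dyadic blocks, where the input is `E/2`; they contribute at most `E/2`. Every input is at most
`M = E⁻¹(1-E)^{-2r-2}`, so the remaining terms contribute at most `(1-E)^N M ≤ (1-E)^{2^{2n}} M`.
-/

theorem tsum_subtype_le_int_eq_tsum_nat {α : Type*} [AddCommMonoid α] [TopologicalSpace α]
    (f : ℤ → α) (m : ℤ) : ∑' j : {j : ℤ // j ≤ m}, f j = ∑' i : ℕ, f (m - i) := by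
  let e : ℕ ≃ {j : ℤ // j ≤ m} :=
    { toFun := fun i => ⟨m - i, by omega⟩
      invFun := fun j => (m - j.1).toNat
      left_inv := fun i => by simp
      right_inv := fun j => Subtype.ext (by have := j.2; simp; omega) }
  exact (e.tsum_eq fun j => f j).symm

theorem one_sub_mul_tsum_pow_mul_le {q c M : ℝ} {a : ℕ → ℝ} {N : ℕ} (hq0 : 0 ≤ q) (hq1 : q < 1)
    (hc : 0 ≤ c) (ha0 : ∀ i, 0 ≤ a i) (haM : ∀ i, a i ≤ M) (hac : ∀ i < N, a i ≤ c) :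
    (1 - q) * ∑' i, q ^ i * a i ≤ c + q ^ N * M := by
  have hgeom := summable_geometric_of_lt_one hq0 hq1
  have hsum : Summable fun i => q ^ i * a i :=
    (hgeom.mul_left M).of_nonneg_of_le (fun i => mul_nonneg (pow_nonneg hq0 i) (ha0 i))
      fun i => by rw [mul_comm M]; exact mul_le_mul_of_nonneg_left (haM i) (pow_nonneg hq0 i)
  have hhead : (1 - q) * ∑ i ∈ Finset.range N, q ^ i * a i ≤ c := by
    calc (1 - q) * ∑ i ∈ Finset.range N, q ^ i * a i
        ≤ (1 - q) * ∑ i ∈ Finset.range N, q ^ i * c := by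
          gcongr with i hi
          exact hac i (Finset.mem_range.mp hi)
      _ = c * (1 - q ^ N) := by rw [← Finset.sum_mul, ← mul_assoc, mul_neg_geom_sum, mul_comm]
      _ ≤ c := mul_le_of_le_one_right hc (by linarith [pow_nonneg hq0 N])
  have htail : (1 - q) * ∑' i, q ^ (i + N) * a (i + N) ≤ q ^ N * M := by
    calc (1 - q) * ∑' i, q ^ (i + N) * a (i + N)
        ≤ (1 - q) * ∑' i, q ^ N * M * q ^ i := by
          gcongr ?_ * ?_
          refine ((summable_nat_add_iff N).2 hsum).tsum_le_tsum (fun i => ?_)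
            (hgeom.mul_left _)
          rw [pow_add, mul_comm (q ^ i), mul_assoc, mul_assoc, mul_comm (q ^ i)]
          exact mul_le_mul_of_nonneg_left
            (mul_le_mul_of_nonneg_right (haM _) (pow_nonneg hq0 i)) (pow_nonneg hq0 N)
      _ = q ^ N * M := by
          rw [tsum_mul_left, tsum_geometric_of_lt_one hq0 hq1]
          field_simp [(sub_pos.2 hq1).ne']
  rw [← hsum.sum_add_tsum_nat_add N, mul_add]
  exact add_le_add hhead htail

theorem not_mem_dyadic_blocks_of_mem_gap {n : ℕ} {t : ℤ} (h1 : 2 ^ (2 * n + 1) ≤ t)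
    (h2 : t < 2 ^ (2 * (n + 1))) : ¬ ∃ m : ℕ, (2 ^ (2 * m) : ℤ) ≤ t ∧ t < 2 ^ (2 * m + 1) := by
  rintro ⟨m, hm1, hm2⟩
  rcases le_or_gt m n with hmn | hmn
  · have : (2 : ℤ) ^ (2 * m + 1) ≤ 2 ^ (2 * n + 1) := pow_le_pow_right₀ (by norm_num) (by omega)
    omega
  · have : (2 : ℤ) ^ (2 * (n + 1)) ≤ 2 ^ (2 * m) := pow_le_pow_right₀ (by norm_num) (by omega)
    omega

theorem one_le_inv_mul_inv_one_sub_pow {E : ℝ} (hE0 : 0 < E) (hE1 : E < 1) (p : ℕ) :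
    1 ≤ E⁻¹ * ((1 - E) ^ p)⁻¹ :=
  one_le_mul_of_one_le_of_one_le ((one_le_inv₀ hE0).2 hE1.le)
    ((one_le_inv₀ (pow_pos (by linarith) _)).2 (pow_le_one₀ (by linarith) (by linarith)))

/-- the neither-nor example: with
`s⁰_t = E⁻¹(1-E)^{-2r-2}` on dyadic blocks `[2^{2n}, 2^{2n+1})` and `E/2` otherwise,
and `z_t = E ∑_{j ≤ t-1} (1-E)^{t-1-j} s⁰_j`, for `n` large enough
(`(1-E)^{2^{2n}} E⁻¹(1-E)^{-2r-2} < E/2`) and `3·2^{2n} ≤ k < 2^{2(n+1)}`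
one has `z_k < E`, and indeed
`z_k ≤ E/2 + (1-E)^{2^{2n}} E⁻¹(1-E)^{-2r-2}`. -/
theorem stmt19 (E : ℝ) (hE0 : 0 < E) (hE1 : E < 1) (r : ℕ)
    (s0 z : ℤ → ℝ)
    (hs1 : ∀ t : ℤ, (∃ n : ℕ, (2 ^ (2 * n) : ℤ) ≤ t ∧ t < 2 ^ (2 * n + 1)) →
      s0 t = E⁻¹ * ((1 - E) ^ (2 * r + 2))⁻¹)
    (hs2 : ∀ t : ℤ, (¬ ∃ n : ℕ, (2 ^ (2 * n) : ℤ) ≤ t ∧ t < 2 ^ (2 * n + 1)) →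
      s0 t = E / 2)
    (hz : ∀ t : ℤ, z t =
      E * ∑' j : {j : ℤ // j ≤ t - 1}, (1 - E) ^ ((t - 1 - j.1).toNat) * s0 j.1) :
    ∀ n : ℕ,
      (1 - E) ^ (2 ^ (2 * n)) * (E⁻¹ * ((1 - E) ^ (2 * r + 2))⁻¹) < E / 2 →
      ∀ k : ℤ, 3 * 2 ^ (2 * n) ≤ k → k < 2 ^ (2 * (n + 1)) →
        z k < E ∧
        z k ≤ E / 2 + (1 - E) ^ (2 ^ (2 * n)) * (E⁻¹ * ((1 - E) ^ (2 * r + 2))⁻¹) := by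
  intro n hn k hk1 hk2
  set M := E⁻¹ * ((1 - E) ^ (2 * r + 2))⁻¹
  have hM : E / 2 ≤ M := by
    linarith [one_le_inv_mul_inv_one_sub_pow hE0 hE1 (2 * r + 2)]
  have hs_bounds : ∀ t, 0 ≤ s0 t ∧ s0 t ≤ M := fun t => by
    by_cases h : ∃ m : ℕ, (2 ^ (2 * m) : ℤ) ≤ t ∧ t < 2 ^ (2 * m + 1)
    · rw [hs1 t h]; exact ⟨by positivity, le_rfl⟩
    · rw [hs2 t h]; exact ⟨by positivity, hM⟩
  have hzk : z k = (1 - (1 - E)) * ∑' i : ℕ, (1 - E) ^ i * s0 (k - 1 - i) := by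
    rw [hz, tsum_subtype_le_int_eq_tsum_nat fun j => (1 - E) ^ (k - 1 - j).toNat * s0 j]
    simp only [sub_sub_cancel, Int.toNat_natCast]
  have hpow₁ : (2 : ℤ) ^ (2 * n + 1) = 2 * 2 ^ (2 * n) := by ring
  have hpow₂ : (2 : ℤ) ^ (2 * (n + 1)) = 4 * 2 ^ (2 * n) := by ring
  set N := (k - 2 ^ (2 * n + 1)).toNat
  have hNk : (N : ℤ) = k - 2 ^ (2 * n + 1) := Int.toNat_of_nonneg (by omega)
  have hgap : ∀ i < N, s0 (k - 1 - i) ≤ E / 2 := fun i hi =>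
    (hs2 _ (not_mem_dyadic_blocks_of_mem_gap (n := n) (by omega) (by omega))).le
  have hzN : z k ≤ E / 2 + (1 - E) ^ N * M := hzk ▸
    one_sub_mul_tsum_pow_mul_le (by linarith) (by linarith) (by positivity)
      (fun i => (hs_bounds _).1) (fun i => (hs_bounds _).2) hgap
  have hNn : (1 - E) ^ N ≤ (1 - E) ^ 2 ^ (2 * n) :=
    pow_le_pow_of_le_one (by linarith) (by linarith) (by zify; omega)
  have hz_le : z k ≤ E / 2 + (1 - E) ^ 2 ^ (2 * n) * M :=
    hzN.trans (by gcongr)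
  exact ⟨by linarith, hz_le⟩
end
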